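/- Let G be a torsion-free group and let α ∈ ℂG be a nonzero golden element (i.e. α is self-adjoint with Υ(α) = a_1 − ∑_{g≠1} |a_g| ≥ 0). Then α is not an analytical zero divisor: there is no nonzero β ∈ ℓ²(G) with αβ = 0. -/

import Mathlib

open scoped ENNReal

/-- The adjoint `α* = ∑ conj(a_g)·g⁻¹` of an element of the complex group algebra. -/
noncomputable def MonoidAlgebra.adj {G : Type*} [Group G] (α : MonoidAlgebra ℂ G) :
    MonoidAlgebra ℂ G :=
  MonoidAlgebra.ofCoeff
    (Finsupp.mapRange (starRingEnd ℂ) (map_zero _) (Finsupp.equivMapDomain (Equiv.inv G) α.coeff))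

/-- The product of `α ∈ ℂG` with `β ∈ ℓ²(G)`, defined pointwise by the finite sum
`(αβ)(x) = ∑_{g ∈ supp α} α(g)·β(g⁻¹x)`. -/
noncomputable def smulL2 {G : Type*} [Group G] (α : MonoidAlgebra ℂ G)
    (β : lp (fun _ : G => ℂ) 2) : G → ℂ :=
  fun x => ∑ g ∈ α.coeff.support, α.coeff g * β (g⁻¹ * x)

/-- `Υ(α) = a_1 − ∑_{g ≠ 1} |a_g|` (for self-adjoint `α`, `a_1` is real, so we take
the real part). -/
noncomputable def Upsilon {G : Type*} [Group G] [DecidableEq G] (α : MonoidAlgebra ℂ G) : ℝ :=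
  (α.coeff 1).re - ∑ g ∈ α.coeff.support.erase 1, ‖α.coeff g‖

/-- A self-adjoint element of `ℂG` is golden if `Υ(α) ≥ 0`. -/
def IsGolden {G : Type*} [Group G] [DecidableEq G] (α : MonoidAlgebra ℂ G) : Prop :=
  MonoidAlgebra.adj α = α ∧ 0 ≤ Upsilon α

lemma translate_memℓp {G : Type*} [Group G] (g : G) (f : lp (fun _ : G => ℝ) ∞) :
    Memℓp (fun x => f (g⁻¹ * x)) ∞ := by
  have hf : Memℓp (fun x => f x) ∞ := f.2
  rw [memℓp_infty_iff] at hf ⊢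
  obtain ⟨C, hC⟩ := hf
  exact ⟨C, by rintro y ⟨x, rfl⟩; exact hC ⟨g⁻¹ * x, rfl⟩⟩

/-- A group is amenable if there is a left-invariant mean on `ℓ∞(G, ℝ)`: a linear
functional `m` with `m 1 = 1`, `m f ≥ 0` whenever `f ≥ 0`, which is invariant under
left translation. -/
def IsAmenable (G : Type*) [Group G] : Prop :=
  ∃ m : lp (fun _ : G => ℝ) ∞ →ₗ[ℝ] ℝ,
    m 1 = 1 ∧
    (∀ f : lp (fun _ : G => ℝ) ∞, (∀ x, 0 ≤ f x) → 0 ≤ m f) ∧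
    ∀ (g : G) (f : lp (fun _ : G => ℝ) ∞),
      m ⟨fun x => f (g⁻¹ * x), translate_memℓp g f⟩ = m f

/-- A monoid is torsion-free if no element other than `1` has finite order
(the former Mathlib `Monoid.IsTorsionFree`). -/
def Monoid.IsTorsionFree (G : Type*) [Monoid G] : Prop :=
  ∀ g : G, g ≠ 1 → ¬IsOfFinOrder g

/-!
If `αβ = 0` with `β ≠ 0`, pairing with `β` gives `a₁‖β‖² = -∑_{g ≠ 1} a_g ⟪β, gβ⟫`. Translations
are isometries of `ℓ²(G)`, so Cauchy–Schwarz and `Υ(α) ≥ 0` force `|⟪β, gβ⟫| = ‖β‖²` for every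
`g ≠ 1` in the support of `α`, and such a `g` exists since `a₁β ≠ 0` unless `α = 0`. Equality in
Cauchy–Schwarz makes `gβ` a unimodular multiple of `β`, so `|β|` is constant along the orbits of
`g`. These orbits are infinite because `G` is torsion-free, contradicting `β ∈ ℓ²(G)`.
-/

open scoped InnerProductSpace

theorem Memℓp.comp_equiv {α β E : Type*} [NormedAddCommGroup E] {p : ℝ≥0∞} {f : α → E}
    (hf : Memℓp f p) (e : β ≃ α) : Memℓp (f ∘ e) p := by
  rcases p.trichotomy with rfl | rfl | hp
  · rw [memℓp_zero_iff] at hf ⊢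
    exact hf.preimage e.injective.injOn
  · rw [memℓp_infty_iff] at hf ⊢
    rwa [← e.surjective.range_comp] at hf
  · rw [memℓp_gen_iff hp] at hf ⊢
    exact e.summable_iff.2 hf

theorem Memℓp.eq_zero_of_norm_mul_eq {G E : Type*} [Group G] [NormedAddCommGroup E]
    {p : ℝ≥0∞} (hp : 0 < p.toReal) {f : G → E} (hf : Memℓp f p) {g : G}
    (hg : ¬IsOfFinOrder g) (hinv : ∀ x, ‖f (g * x)‖ = ‖f x‖) : f = 0 := by
  funext x
  have horbit : ∀ n : ℕ, ‖f (g ^ n * x)‖ = ‖f x‖ := by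
    intro n
    induction n with
    | zero => simp
    | succ n ih => rw [pow_succ', mul_assoc, hinv, ih]
  have hinj : Function.Injective fun n : ℕ => g ^ n * x :=
    fun _ _ h => injective_pow_iff_not_isOfFinOrder.2 hg (mul_right_cancel h)
  have hsum := (hf.summable hp).comp_injective hinj
  simp only [Function.comp_def, horbit, summable_const_iff] at hsum
  simpa [hp.ne'] using hsum

section InnerProduct

variable {𝕜 E : Type*} [RCLike 𝕜] [NormedAddCommGroup E] [InnerProductSpace 𝕜 E]

theorem norm_inner_eq_of_smul_add_sum_eq_zero {ι : Type*} {s : Finset ι} {c₀ : 𝕜} {c : ι → 𝕜}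
    {x : E} {y : ι → E} (hy : ∀ i ∈ s, ‖y i‖ = ‖x‖) (hc : ∑ i ∈ s, ‖c i‖ ≤ RCLike.re c₀)
    (h : c₀ • x + ∑ i ∈ s, c i • y i = 0) {i : ι} (hi : i ∈ s) (hci : c i ≠ 0) :
    ‖⟪x, y i⟫_𝕜‖ = ‖x‖ * ‖y i‖ := by
  -- Pairing `h` with `x` squeezes the termwise Cauchy–Schwarz bound `hCS` between
  -- `re c₀ * ‖x‖ ^ 2` and itself, so it holds with equality in every term.
  have hinner : c₀ * (‖x‖ ^ 2 : ℝ) + ∑ i ∈ s, c i * ⟪x, y i⟫_𝕜 = 0 := by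
    simpa [inner_add_right, inner_sum, inner_smul_right, inner_self_eq_norm_sq_to_K]
      using congrArg (⟪x, ·⟫_𝕜) h
  have hlower : RCLike.re c₀ * ‖x‖ ^ 2 ≤ ∑ i ∈ s, ‖c i‖ * ‖⟪x, y i⟫_𝕜‖ :=
    calc RCLike.re c₀ * ‖x‖ ^ 2 = RCLike.re (-∑ i ∈ s, c i * ⟪x, y i⟫_𝕜) := by
          rw [← eq_neg_of_add_eq_zero_left hinner, RCLike.re_mul_ofReal]
      _ ≤ ‖∑ i ∈ s, c i * ⟪x, y i⟫_𝕜‖ := by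
          rw [map_neg]; exact (neg_le_abs _).trans (RCLike.abs_re_le_norm _)
      _ ≤ ∑ i ∈ s, ‖c i‖ * ‖⟪x, y i⟫_𝕜‖ := by
          simpa only [norm_mul] using norm_sum_le s (fun i => c i * ⟪x, y i⟫_𝕜)
  have hupper : ∑ i ∈ s, ‖c i‖ * (‖x‖ * ‖y i‖) ≤ RCLike.re c₀ * ‖x‖ ^ 2 :=
    calc ∑ i ∈ s, ‖c i‖ * (‖x‖ * ‖y i‖) = (∑ i ∈ s, ‖c i‖) * ‖x‖ ^ 2 := by
          rw [Finset.sum_mul]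
          exact Finset.sum_congr rfl fun i hi => by rw [hy i hi, sq]
      _ ≤ RCLike.re c₀ * ‖x‖ ^ 2 := by gcongr
  have hCS : ∀ i ∈ s, ‖c i‖ * ‖⟪x, y i⟫_𝕜‖ ≤ ‖c i‖ * (‖x‖ * ‖y i‖) :=
    fun i _ => by gcongr; exact norm_inner_le_norm x (y i)
  have hterm := (Finset.sum_eq_sum_iff_of_le hCS).1
    ((Finset.sum_le_sum hCS).antisymm (hupper.trans hlower)) i hi
  exact mul_left_cancel₀ (norm_ne_zero_iff.2 hci) hterm

theorem exists_norm_eq_one_smul_of_norm_inner_eq {x y : E} (hx : x ≠ 0) (hy : ‖y‖ = ‖x‖)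
    (h : ‖⟪x, y⟫_𝕜‖ = ‖x‖ * ‖y‖) : ∃ r : 𝕜, ‖r‖ = 1 ∧ y = r • x := by
  have hy0 : y ≠ 0 := by rwa [← norm_ne_zero_iff, hy, norm_ne_zero_iff]
  obtain ⟨r, -, rfl⟩ := (norm_inner_eq_norm_iff hx hy0).1 h
  rw [norm_smul] at hy
  exact ⟨r, (mul_eq_right₀ (norm_ne_zero_iff.2 hx)).1 hy, rfl⟩

end InnerProduct

namespace lp

variable {G E : Type*} [Group G] [NormedAddCommGroup E] {p : ℝ≥0∞}

noncomputable def translate (g : G) (f : lp (fun _ : G => E) p) : lp (fun _ : G => E) p :=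
  ⟨fun x => f (g⁻¹ * x), (lp.memℓp f).comp_equiv (Equiv.mulLeft g⁻¹)⟩

@[simp] theorem translate_apply (g : G) (f : lp (fun _ : G => E) p) (x : G) :
    translate g f x = f (g⁻¹ * x) := rfl

theorem norm_translate (hp : 0 < p.toReal) (g : G) (f : lp (fun _ : G => E) p) :
    ‖translate g f‖ = ‖f‖ := by
  rw [lp.norm_eq_tsum_rpow hp, lp.norm_eq_tsum_rpow hp]
  exact congrArg (· ^ (1 / p.toReal)) ((Equiv.mulLeft g⁻¹).tsum_eq fun x => ‖f x‖ ^ p.toReal)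

end lp

section GroupAlgebra

variable {G : Type*} [Group G] [DecidableEq G]

theorem smulL2_eq_smul_add_sum_translate (α : MonoidAlgebra ℂ G) (β : lp (fun _ : G => ℂ) 2) :
    smulL2 α β = ⇑(α.coeff 1 • β + ∑ g ∈ α.coeff.support.erase 1, α.coeff g • lp.translate g β) := by
  funext x
  simp only [smulL2, lp.coeFn_add, lp.coeFn_sum, lp.coeFn_smul, Pi.add_apply, Finset.sum_apply,
    Pi.smul_apply, lp.translate_apply, smul_eq_mul]
  by_cases h1 : (1 : G) ∈ α.coeff.support
  · rw [← Finset.add_sum_erase _ _ h1, inv_one, one_mul]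
  · rw [Finsupp.notMem_support_iff.1 h1, Finset.erase_eq_of_notMem h1, zero_mul, zero_add]

theorem nonempty_support_erase_one_of_smul_add_sum_eq_zero {α : MonoidAlgebra ℂ G} (hα : α ≠ 0)
    {β : lp (fun _ : G => ℂ) 2} (hβ : β ≠ 0)
    (h : α.coeff 1 • β + ∑ g ∈ α.coeff.support.erase 1, α.coeff g • lp.translate g β = 0) :
    (α.coeff.support.erase 1).Nonempty := by
  rw [Finset.nonempty_iff_ne_empty]
  intro hempty
  rw [hempty, Finset.sum_empty, add_zero, smul_eq_zero] at h
  rcases (Finset.erase_eq_empty_iff _ _).1 hempty with hsupp | hsupp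
  · exact hα (MonoidAlgebra.coeff_eq_zero.1 (Finsupp.support_eq_empty.1 hsupp))
  · have h1 : α.coeff 1 ≠ 0 := Finsupp.mem_support_iff.1 (hsupp ▸ Finset.mem_singleton_self 1)
    exact h.elim h1 hβ

end GroupAlgebra

/-- In the group algebra of a torsion-free group, a nonzero golden element is not an
analytical zero divisor. -/
theorem stmt_13 {G : Type*} [Group G] [DecidableEq G] (hG : Monoid.IsTorsionFree G)
    (α : MonoidAlgebra ℂ G) (hα : α ≠ 0) (hgold : IsGolden α) :
    ¬ ∃ β : lp (fun _ : G => ℂ) 2, β ≠ 0 ∧ smulL2 α β = 0 := by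
  rintro ⟨β, hβ, hαβ⟩
  have hrel : α.coeff 1 • β + ∑ g ∈ α.coeff.support.erase 1, α.coeff g • lp.translate g β = 0 :=
    lp.ext (by rw [← smulL2_eq_smul_add_sum_translate, hαβ]; rfl)
  obtain ⟨g, hg⟩ := nonempty_support_erase_one_of_smul_add_sum_eq_zero hα hβ hrel
  have hnorm : ∀ k : G, ‖lp.translate k β‖ = ‖β‖ :=
    fun k => lp.norm_translate (by norm_num) k β
  have hCS := norm_inner_eq_of_smul_add_sum_eq_zero (fun k _ => hnorm k)
    (by simpa [Upsilon, sub_nonneg] using hgold.2) hrel hg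
    (Finsupp.mem_support_iff.1 (Finset.mem_of_mem_erase hg))
  obtain ⟨r, hr, htr⟩ := exists_norm_eq_one_smul_of_norm_inner_eq hβ (hnorm g) hCS
  have hinv : ∀ x, ‖β (g⁻¹ * x)‖ = ‖β x‖ := fun x => by
    rw [← lp.translate_apply, htr, lp.coeFn_smul, Pi.smul_apply, norm_smul, hr, one_mul]
  have htorsion : ¬IsOfFinOrder g⁻¹ := hG g⁻¹ (inv_ne_one.2 (Finset.ne_of_mem_erase hg))
  exact hβ (lp.ext ((lp.memℓp β).eq_zero_of_norm_mul_eq (by norm_num) htorsion hinv))
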